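/- Let p≥4, x∈ℝ^d and 0<R<1, and let φ∈C⁴_b(B_R(x)). Then there exists a constant C>0, depending only on p, d and ‖φ‖_{C⁴_b(B_R(x))}, such that for every y∈B_{R/2}(0)∖{0}: |D_y[φ](x) − (p−1)|y|^{−p} |∇φ(x)·y|^{p−2} ⟨D²φ(x)y, y⟩| ≤ C |y|². -/

import Mathlib

open MeasureTheory Metric Filter
open scoped Topology RealInnerProductSpace MeasureTheory NNReal

noncomputable section

abbrev Euc (d : ℕ) := EuclideanSpace ℝ (Fin d)

/-- `J_p(ξ) = |ξ|^{p-2} ξ`. -/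
def Jp (p ξ : ℝ) : ℝ := |ξ| ^ (p - 2) * ξ

/-- Second derivative of `φ` at `x` as a bilinear form: `⟨D²φ(x) v, w⟩`. -/
def D2 {d : ℕ} (φ : Euc d → ℝ) (x v w : Euc d) : ℝ := iteratedFDeriv ℝ 2 φ x ![v, w]

/-- The `p`-Laplacian
`Δ_pφ(x) = |∇φ(x)|^{p−2}Δφ(x) + (p−2)|∇φ(x)|^{p−4}⟨D²φ(x)∇φ(x),∇φ(x)⟩`
(with the junk-value conventions of `Real.rpow`, this is `0` when `∇φ(x) = 0` and `p > 2`). -/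
def pLap {d : ℕ} (p : ℝ) (φ : Euc d → ℝ) (x : Euc d) : ℝ :=
  ‖gradient φ x‖ ^ (p - 2) *
      (∑ i : Fin d, D2 φ x (EuclideanSpace.single i 1) (EuclideanSpace.single i 1)) +
    (p - 2) * ‖gradient φ x‖ ^ (p - 4) * D2 φ x (gradient φ x) (gradient φ x)

/-- `φ ∈ C⁴_b(s)` with `‖φ‖_{C⁴_b(s)} ≤ M`: `φ` is `C⁴` on `s` with all derivatives
up to order `4` bounded by `M`. -/
def C4bOn {d : ℕ} (φ : Euc d → ℝ) (s : Set (Euc d)) (M : ℝ) : Prop :=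
  ContDiffOn ℝ 4 φ s ∧ ∀ k : ℕ, k ≤ 4 → ∀ y ∈ s, ‖iteratedFDerivWithin ℝ k φ s y‖ ≤ M

/-- The surface measure on spheres in `ℝ^d`: the `(d−1)`-dimensional Hausdorff measure. -/
def sphMeas (d : ℕ) : Measure (Euc d) := μH[(d : ℝ) - 1]

/-- Euclidean inner product, as a real number. -/
def innP {d : ℕ} (v w : Euc d) : ℝ := ⟪v, w⟫

/-- `D_y[φ](x) = (J_p(φ(x+y)−φ(x)) + J_p(φ(x−y)−φ(x)))/|y|^p`. -/
def DyOp {d : ℕ} (p : ℝ) (φ : Euc d → ℝ) (x y : Euc d) : ℝ :=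
  (Jp p (φ (x + y) - φ x) + Jp p (φ (x - y) - φ x)) / ‖y‖ ^ p


private lemma mono_aux {F F' : ℝ → ℝ} (hd : ∀ t ∈ Set.Icc (0:ℝ) 1, HasDerivAt F (F' t) t)
    (h : ∀ t ∈ Set.Icc (0:ℝ) 1, 0 ≤ F' t) : ∀ t ∈ Set.Icc (0:ℝ) 1, F 0 ≤ F t := by
  intro t ht
  have hmono := monotoneOn_of_deriv_nonneg (convex_Icc (0:ℝ) 1)
    (fun u hu => (hd u hu).continuousAt.continuousWithinAt)
    (fun u hu => ((hd u (interior_subset hu)).differentiableAt).differentiableWithinAt)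
    (fun u hu => by rw [(hd u (interior_subset hu)).deriv]; exact h u (interior_subset hu))
  exact hmono (Set.left_mem_Icc.2 zero_le_one) ht ht.1

private lemma chainStep {f f' : ℝ → ℝ} {B : ℝ} {k : ℕ}
    (hd : ∀ t ∈ Set.Icc (0:ℝ) 1, HasDerivAt f (f' t) t) (h0 : f 0 = 0)
    (hb : ∀ t ∈ Set.Icc (0:ℝ) 1, |f' t| ≤ B * t ^ k) :
    ∀ t ∈ Set.Icc (0:ℝ) 1, |f t| ≤ B * t ^ (k+1) / (k+1) := by
  have hpow : ∀ u : ℝ, HasDerivAt (fun t : ℝ => B * t ^ (k+1) / ((k:ℝ)+1)) (B * u ^ k) u := by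
    intro u
    have h := ((hasDerivAt_pow (k+1) u).const_mul B).div_const ((k:ℝ)+1)
    refine h.congr_deriv ?_
    have hk : ((k:ℝ)+1) ≠ 0 := by positivity
    field_simp
    push_cast
    ring
  have key : ∀ (g g' : ℝ → ℝ), (∀ t ∈ Set.Icc (0:ℝ) 1, HasDerivAt g (g' t) t) →
      (∀ t ∈ Set.Icc (0:ℝ) 1, g' t ≤ B * t ^ k) → g 0 = 0 →
      ∀ t ∈ Set.Icc (0:ℝ) 1, g t ≤ B * t ^ (k+1) / (k+1) := by
    intro g g' hg hg' hg0 t ht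
    have h1 := mono_aux (F := fun t => B * t ^ (k+1) / ((k:ℝ)+1) - g t)
      (F' := fun t => B * t ^ k - g' t)
      (fun u hu => (hpow u).sub (hg u hu))
      (fun u hu => by have := hg' u hu; linarith) t ht
    push_cast
    simp only [hg0, zero_pow (Nat.succ_ne_zero k), mul_zero, zero_div, sub_zero] at h1
    linarith
  intro t ht
  have h₁ := key f f' hd (fun u hu => (abs_le.1 (hb u hu)).2) h0 t ht
  have h₂ := key (fun u => -f u) (fun u => -f' u)
    (fun u hu => (hd u hu).neg)
    (fun u hu => by have := (abs_le.1 (hb u hu)).1; linarith) (by simp [h0]) t ht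
  rw [abs_le]
  constructor <;> push_cast at h₁ h₂ ⊢ <;> linarith

private lemma chain4 {g0 g1 g2 g3 g4 : ℝ → ℝ} {B : ℝ}
    (h0 : ∀ t ∈ Set.Icc (0:ℝ) 1, HasDerivAt g0 (g1 t) t)
    (h1 : ∀ t ∈ Set.Icc (0:ℝ) 1, HasDerivAt g1 (g2 t) t)
    (h2 : ∀ t ∈ Set.Icc (0:ℝ) 1, HasDerivAt g2 (g3 t) t)
    (h3 : ∀ t ∈ Set.Icc (0:ℝ) 1, HasDerivAt g3 (g4 t) t)
    (hB : ∀ t ∈ Set.Icc (0:ℝ) 1, |g4 t| ≤ B) :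
    |g0 1 - g0 0 - g1 0 - g2 0 / 2 - g3 0 / 6| ≤ B / 24 := by
  have s3 : ∀ t ∈ Set.Icc (0:ℝ) 1, |g3 t - g3 0| ≤ B * t := by
    have := chainStep (f := fun t => g3 t - g3 0) (f' := g4) (k := 0)
      (fun t ht => (h3 t ht).sub_const _) (by simp)
      (fun t ht => by rw [pow_zero, mul_one]; exact hB t ht)
    intro t ht; have h := this t ht; norm_num at h; exact h
  have s2 : ∀ t ∈ Set.Icc (0:ℝ) 1, |g2 t - g2 0 - g3 0 * t| ≤ B * t ^ 2 / 2 := by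
    have := chainStep (f := fun t => g2 t - g2 0 - g3 0 * t) (f' := fun t => g3 t - g3 0)
      (fun t ht => by
        exact (((h2 t ht).sub_const (g2 0)).sub ((hasDerivAt_id t).const_mul (g3 0))).congr_deriv (by simp))
      (by simp)
      (k := 1) (fun t ht => by rw [pow_one]; exact s3 t ht)
    intro t ht; have h := this t ht; norm_num at h; exact h
  have s1 : ∀ t ∈ Set.Icc (0:ℝ) 1, |g1 t - g1 0 - g2 0 * t - g3 0 * t ^ 2 / 2|
      ≤ B / 2 * t ^ 3 / 3 := by
    have := chainStep (f := fun t => g1 t - g1 0 - g2 0 * t - g3 0 * t ^ 2 / 2)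
      (f' := fun t => g2 t - g2 0 - g3 0 * t) (k := 2)
      (fun t ht => by
        have hpoly : HasDerivAt (fun t : ℝ => g3 0 * t ^ 2 / 2) (g3 0 * t) t := by
          have := ((hasDerivAt_pow 2 t).const_mul (g3 0)).div_const 2
          refine this.congr_deriv ?_; push_cast; ring
        exact ((((h1 t ht).sub_const (g1 0)).sub
          ((hasDerivAt_id t).const_mul (g2 0))).sub hpoly).congr_deriv (by simp))
      (by simp)
      (fun t ht => by
        have := s2 t ht; rw [show B / 2 * t ^ 2 = B * t ^ 2 / 2 by ring]; exact this)
    intro t ht; have h := this t ht; norm_num at h; exact h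
  have s0 := chainStep (f := fun t => g0 t - g0 0 - g1 0 * t - g2 0 * t ^ 2 / 2 - g3 0 * t ^ 3 / 6)
      (f' := fun t => g1 t - g1 0 - g2 0 * t - g3 0 * t ^ 2 / 2) (k := 3) (B := B / 2 / 3)
      (fun t ht => by
        have hp2 : HasDerivAt (fun t : ℝ => g2 0 * t ^ 2 / 2) (g2 0 * t) t := by
          have := ((hasDerivAt_pow 2 t).const_mul (g2 0)).div_const 2
          refine this.congr_deriv ?_; push_cast; ring
        have hp3 : HasDerivAt (fun t : ℝ => g3 0 * t ^ 3 / 6) (g3 0 * t ^ 2 / 2) t := by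
          have := ((hasDerivAt_pow 3 t).const_mul (g3 0)).div_const 6
          refine this.congr_deriv ?_; push_cast; ring
        exact (((((h0 t ht).sub_const (g0 0)).sub
          ((hasDerivAt_id t).const_mul (g1 0))).sub hp2).sub hp3).congr_deriv (by simp))
      (by simp)
      (fun t ht => by
        have := s1 t ht; rw [show B / 2 / 3 * t ^ 3 = B / 2 * t ^ 3 / 3 by ring]
        exact this)
  have := s0 1 (by norm_num)
  norm_num at this
  linarith [abs_nonneg (g0 1 - g0 0 - g1 0 - g2 0 / 2 - g3 0 / 6)]

private lemma chain3 {g0 g1 g2 g3 : ℝ → ℝ} {B : ℝ}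
    (h0 : ∀ t ∈ Set.Icc (0:ℝ) 1, HasDerivAt g0 (g1 t) t)
    (h1 : ∀ t ∈ Set.Icc (0:ℝ) 1, HasDerivAt g1 (g2 t) t)
    (h2 : ∀ t ∈ Set.Icc (0:ℝ) 1, HasDerivAt g2 (g3 t) t)
    (hB : ∀ t ∈ Set.Icc (0:ℝ) 1, |g3 t| ≤ B) :
    |g0 1 - g0 0 - g1 0 - g2 0 / 2| ≤ B / 6 := by
  have s2 : ∀ t ∈ Set.Icc (0:ℝ) 1, |g2 t - g2 0| ≤ B * t := by
    have := chainStep (f := fun t => g2 t - g2 0) (f' := g3) (k := 0)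
      (fun t ht => (h2 t ht).sub_const _) (by simp)
      (fun t ht => by rw [pow_zero, mul_one]; exact hB t ht)
    intro t ht; have h := this t ht; norm_num at h; exact h
  have s1 : ∀ t ∈ Set.Icc (0:ℝ) 1, |g1 t - g1 0 - g2 0 * t| ≤ B * t ^ 2 / 2 := by
    have := chainStep (f := fun t => g1 t - g1 0 - g2 0 * t) (f' := fun t => g2 t - g2 0)
      (fun t ht => by
        exact (((h1 t ht).sub_const (g1 0)).sub ((hasDerivAt_id t).const_mul (g2 0))).congr_deriv (by simp))
      (by simp)
      (k := 1) (fun t ht => by rw [pow_one]; exact s2 t ht)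
    intro t ht; have h := this t ht; norm_num at h; exact h
  have s0 := chainStep (f := fun t => g0 t - g0 0 - g1 0 * t - g2 0 * t ^ 2 / 2)
      (f' := fun t => g1 t - g1 0 - g2 0 * t) (k := 2) (B := B / 2)
      (fun t ht => by
        have hp2 : HasDerivAt (fun t : ℝ => g2 0 * t ^ 2 / 2) (g2 0 * t) t := by
          have := ((hasDerivAt_pow 2 t).const_mul (g2 0)).div_const 2
          refine this.congr_deriv ?_; push_cast; ring
        exact ((((h0 t ht).sub_const (g0 0)).sub
          ((hasDerivAt_id t).const_mul (g1 0))).sub hp2).congr_deriv (by simp))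
      (by simp)
      (fun t ht => by
        have := s1 t ht; rw [show B / 2 * t ^ 2 = B * t ^ 2 / 2 by ring]; exact this)
  have := s0 1 (by norm_num)
  norm_num at this
  linarith [abs_nonneg (g0 1 - g0 0 - g1 0 - g2 0 / 2)]

private lemma hasDerivAt_Aq {q : ℝ} (hq : 0 ≤ q) (ξ : ℝ) :
    HasDerivAt (fun ξ : ℝ => |ξ| ^ q * ξ) ((q + 1) * |ξ| ^ q) ξ := by
  rcases eq_or_lt_of_le hq with hq0 | hq0
  · simp only [← hq0, Real.rpow_zero, one_mul, zero_add]
    exact hasDerivAt_id' ξ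
  rcases lt_trichotomy ξ 0 with hx | hx | hx
  · have h1 : HasDerivAt (fun ξ : ℝ => -((-ξ) ^ (q + 1))) ((q + 1) * (-ξ) ^ q) ξ := by
      have h := (Real.hasDerivAt_rpow_const (p := q + 1) (x := -ξ)
        (Or.inl (by linarith))).comp ξ ((hasDerivAt_id ξ).neg)
      have h2 := h.neg
      refine h2.congr_deriv ?_
      rw [show q + 1 - 1 = q by ring]
      simp only [Function.comp, id_eq, neg_neg, mul_neg, mul_one, neg_mul]
    have hev : (fun ξ : ℝ => |ξ| ^ q * ξ) =ᶠ[nhds ξ] fun ξ : ℝ => -((-ξ) ^ (q + 1)) := by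
      filter_upwards [Iio_mem_nhds hx] with t ht
      rw [abs_of_neg ht, Real.rpow_add_one (neg_ne_zero.mpr (ne_of_lt ht))]
      ring
    rw [abs_of_neg hx]
    exact h1.congr_of_eventuallyEq hev
  · subst hx
    have hslope : ∀ t : ℝ, t ≠ 0 → slope (fun ξ : ℝ => |ξ| ^ q * ξ) 0 t = |t| ^ q := by
      intro t ht
      rw [slope_def_field]
      field_simp
      simp
    rw [show (q + 1) * |(0:ℝ)| ^ q = 0 by
      simp [Real.zero_rpow (ne_of_gt hq0)]]
    rw [hasDerivAt_iff_tendsto_slope]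
    have htend : Tendsto (fun t : ℝ => |t| ^ q) (nhdsWithin 0 {(0:ℝ)}ᶜ) (nhds 0) := by
      have hc : ContinuousAt (fun t : ℝ => |t| ^ q) 0 := by
        exact (Real.continuousAt_rpow_const _ _ (Or.inr hq)).comp continuous_abs.continuousAt
      have := hc.continuousWithinAt (s := {(0:ℝ)}ᶜ)
      simpa [Real.zero_rpow (ne_of_gt hq0)] using this.tendsto
    exact htend.congr' (by
      filter_upwards [self_mem_nhdsWithin] with t ht
      exact (hslope t ht).symm)
  · have h1 : HasDerivAt (fun ξ : ℝ => ξ ^ (q + 1)) ((q + 1) * ξ ^ q) ξ := by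
      have h := Real.hasDerivAt_rpow_const (p := q + 1) (x := ξ) (Or.inl (ne_of_gt hx))
      rw [show q + 1 - 1 = q by ring] at h
      exact h
    have hev : (fun ξ : ℝ => |ξ| ^ q * ξ) =ᶠ[nhds ξ] fun ξ : ℝ => ξ ^ (q + 1) := by
      filter_upwards [Ioi_mem_nhds hx] with t ht
      rw [abs_of_pos ht, Real.rpow_add_one (ne_of_gt ht)]
    rw [abs_of_pos hx]
    exact h1.congr_of_eventuallyEq hev

private lemma hasDerivAt_Br {r : ℝ} (hr : 2 ≤ r) (ξ : ℝ) :
    HasDerivAt (fun ξ : ℝ => |ξ| ^ r) (r * (|ξ| ^ (r - 2) * ξ)) ξ := by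
  have h := (hasDerivAt_Aq (q := r - 2) (by linarith) ξ).mul (hasDerivAt_id ξ)
  have heq : (fun t : ℝ => |t| ^ r) = fun t : ℝ => |t| ^ (r - 2) * t * t := by
    funext t
    rcases eq_or_ne t 0 with h0 | h0
    · simp [h0, Real.zero_rpow (by linarith : r ≠ 0)]
    · have h2 : |t| ^ r = |t| ^ (r - 2) * |t| ^ (2:ℝ) := by
        rw [← Real.rpow_add (abs_pos.2 h0)]; ring_nf
      rw [h2, show ((2:ℝ) = ((2:ℕ):ℝ)) by norm_num, Real.rpow_natCast]
      rw [sq_abs]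
      ring
  rw [heq]
  refine h.congr_deriv ?_
  simp only [id_eq]
  ring

private lemma Jp_deriv1 {p : ℝ} (hp : 4 ≤ p) (ξ : ℝ) :
    HasDerivAt (Jp p) ((p - 1) * |ξ| ^ (p - 2)) ξ := by
  have h := hasDerivAt_Aq (q := p - 2) (by linarith) ξ
  rw [show p - 2 + 1 = p - 1 by ring] at h
  exact h

private lemma Jp_deriv2 {p : ℝ} (hp : 4 ≤ p) (ξ : ℝ) :
    HasDerivAt (fun ξ : ℝ => (p - 1) * |ξ| ^ (p - 2))
      ((p - 1) * (p - 2) * (|ξ| ^ (p - 4) * ξ)) ξ := by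
  have h := (hasDerivAt_Br (r := p - 2) (by linarith) ξ).const_mul (p - 1)
  rw [show p - 2 - 2 = p - 4 by ring] at h
  refine h.congr_deriv ?_
  ring

private lemma Jp_deriv3 {p : ℝ} (hp : 4 ≤ p) (ξ : ℝ) :
    HasDerivAt (fun ξ : ℝ => (p - 1) * (p - 2) * (|ξ| ^ (p - 4) * ξ))
      ((p - 1) * (p - 2) * (p - 3) * |ξ| ^ (p - 4)) ξ := by
  have h := (hasDerivAt_Aq (q := p - 4) (by linarith) ξ).const_mul ((p - 1) * (p - 2))
  refine h.congr_deriv ?_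
  rw [show p - 4 + 1 = p - 3 by ring]
  ring

private lemma taylor3 {p : ℝ} (hp : 4 ≤ p) (s u B : ℝ)
    (hB : ∀ t ∈ Set.Icc (0:ℝ) 1, (p-1)*(p-2)*(p-3) * |s + t * u| ^ (p-4) ≤ B) :
    |Jp p (s + u) - Jp p s - (p-1) * |s| ^ (p-2) * u
      - (p-1)*(p-2) * (|s| ^ (p-4) * s) * u ^ 2 / 2| ≤ B * |u| ^ 3 / 6 := by
  have hline : ∀ t : ℝ, HasDerivAt (fun t : ℝ => s + t * u) u t := by
    intro t; simpa using ((hasDerivAt_id t).mul_const u).const_add s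
  have h0 : ∀ t ∈ Set.Icc (0:ℝ) 1, HasDerivAt (fun t : ℝ => Jp p (s + t * u))
      ((fun t : ℝ => (p-1) * |s + t * u| ^ (p-2) * u) t) t := by
    intro t _
    have := (Jp_deriv1 hp (s + t * u)).comp t (hline t)
    exact this
  have h1 : ∀ t ∈ Set.Icc (0:ℝ) 1,
      HasDerivAt (fun t : ℝ => (p-1) * |s + t * u| ^ (p-2) * u)
      ((p-1)*(p-2) * (|s + t * u| ^ (p-4) * (s + t * u)) * u ^ 2) t := by
    intro t _
    have h := ((Jp_deriv2 hp (s + t * u)).comp t (hline t)).mul_const u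
    dsimp only [Function.comp] at h
    refine h.congr_deriv ?_
    ring
  have h2 : ∀ t ∈ Set.Icc (0:ℝ) 1,
      HasDerivAt (fun t : ℝ => (p-1)*(p-2) * (|s + t * u| ^ (p-4) * (s + t * u)) * u ^ 2)
      ((p-1)*(p-2)*(p-3) * |s + t * u| ^ (p-4) * u ^ 3) t := by
    intro t _
    have h := ((Jp_deriv3 hp (s + t * u)).comp t (hline t)).mul_const (u ^ 2)
    dsimp only [Function.comp] at h
    refine h.congr_deriv ?_
    ring
  have hB3 : ∀ t ∈ Set.Icc (0:ℝ) 1,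
      |(p-1)*(p-2)*(p-3) * |s + t * u| ^ (p-4) * u ^ 3| ≤ B * |u| ^ 3 := by
    intro t ht
    rw [abs_mul, abs_pow]
    have hco : 0 ≤ (p-1)*(p-2)*(p-3) * |s + t * u| ^ (p-4) :=
      mul_nonneg (mul_nonneg (mul_nonneg (by linarith) (by linarith)) (by linarith))
        (Real.rpow_nonneg (abs_nonneg _) _)
    rw [abs_of_nonneg hco]
    exact mul_le_mul_of_nonneg_right (hB t ht) (by positivity)
  have H := chain3 h0 h1 h2 hB3
  simp only [zero_mul, add_zero, one_mul, mul_zero] at H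
  convert H using 2
  try ring

private lemma phi_taylor {d : ℕ} {φ : Euc d → ℝ} {x : Euc d} {R M : ℝ} (hR0 : 0 < R)
    (hsm : ContDiffOn ℝ 4 φ (ball x R))
    (hbd : ∀ u ∈ ball x R, ‖iteratedFDerivWithin ℝ 4 φ (ball x R) u‖ ≤ M)
    {z : Euc d} (hz : ‖z‖ < R) :
    |φ (x + z) - φ x - fderiv ℝ φ x z - iteratedFDeriv ℝ 2 φ x (fun _ => z) / 2
      - iteratedFDeriv ℝ 3 φ x (fun _ => z) / 6| ≤ M * ‖z‖ ^ 4 / 24 := by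
  have hball : ∀ t ∈ Set.Icc (0:ℝ) 1, x + t • z ∈ ball x R := by
    intro t ht
    rw [mem_ball_iff_norm, add_sub_cancel_left, norm_smul]
    calc ‖t‖ * ‖z‖ ≤ 1 * ‖z‖ := by
          apply mul_le_mul_of_nonneg_right _ (norm_nonneg z)
          rw [Real.norm_eq_abs, abs_le]; exact ⟨by linarith [ht.1], ht.2⟩
      _ < R := by rwa [one_mul]
  have hdiff : ∀ k : ℕ, k < 4 → ∀ u ∈ ball x R,
      DifferentiableAt ℝ (iteratedFDeriv ℝ k φ) u := by
    intro k hk u hu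
    have h1 : DifferentiableWithinAt ℝ (iteratedFDerivWithin ℝ k φ (ball x R)) (ball x R) u :=
      (hsm.differentiableOn_iteratedFDerivWithin (by exact_mod_cast hk)
        isOpen_ball.uniqueDiffOn) u hu
    have h2 := h1.differentiableAt (isOpen_ball.mem_nhds hu)
    exact h2.congr_of_eventuallyEq (Filter.eventuallyEq_of_mem (isOpen_ball.mem_nhds hu)
      fun v hv => ((iteratedFDerivWithin_of_isOpen k isOpen_ball) hv).symm)
  have hchain : ∀ k : ℕ, k < 4 → ∀ t ∈ Set.Icc (0:ℝ) 1,
      HasDerivAt (fun t : ℝ => iteratedFDeriv ℝ k φ (x + t • z) (fun _ => z))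
        (iteratedFDeriv ℝ (k+1) φ (x + t • z) (fun _ => z)) t := by
    intro k hk t ht
    have hu : x + t • z ∈ ball x R := hball t ht
    have hline : HasDerivAt (fun t : ℝ => x + t • z) z t := by
      simpa using ((hasDerivAt_id t).smul_const z).const_add x
    have hF := (hdiff k hk _ hu).hasFDerivAt
    have hcomp := hF.comp_hasDerivAt t hline
    have happ := (ContinuousMultilinearMap.apply ℝ (fun _ : Fin k => Euc d) ℝ
      (fun _ => z)).hasFDerivAt.comp_hasDerivAt t hcomp
    have hval : (ContinuousMultilinearMap.apply ℝ (fun _ : Fin k => Euc d) ℝ (fun _ => z))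
        (fderiv ℝ (iteratedFDeriv ℝ k φ) (x + t • z) z)
        = iteratedFDeriv ℝ (k+1) φ (x + t • z) (fun _ => z) := by
      rw [iteratedFDeriv_succ_apply_left]
      rfl
    rw [hval] at happ
    exact happ
  have hB : ∀ t ∈ Set.Icc (0:ℝ) 1,
      |iteratedFDeriv ℝ 4 φ (x + t • z) (fun _ => z)| ≤ M * ‖z‖ ^ 4 := by
    intro t ht
    have hu := hball t ht
    have hnorm : ‖iteratedFDeriv ℝ 4 φ (x + t • z)‖ ≤ M := by
      rw [← iteratedFDerivWithin_of_isOpen 4 isOpen_ball hu]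
      exact hbd _ hu
    calc |iteratedFDeriv ℝ 4 φ (x + t • z) (fun _ => z)|
        ≤ ‖iteratedFDeriv ℝ 4 φ (x + t • z)‖ * ∏ _i : Fin 4, ‖z‖ :=
          (iteratedFDeriv ℝ 4 φ (x + t • z)).le_opNorm _
      _ ≤ M * ‖z‖ ^ 4 := by
          rw [Finset.prod_const]
          simp only [Finset.card_univ, Fintype.card_fin]
          exact mul_le_mul_of_nonneg_right hnorm (by positivity)
  have H := chain4 (hchain 0 (by norm_num)) (hchain 1 (by norm_num)) (hchain 2 (by norm_num))
    (hchain 3 (by norm_num)) hB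
  have e0 : (0:ℕ)+1 = 1 := rfl
  have e1 : (1:ℕ)+1 = 2 := rfl
  have e2 : (2:ℕ)+1 = 3 := rfl
  simp only [one_smul, zero_smul, add_zero, iteratedFDeriv_zero_apply] at H
  have h1 : iteratedFDeriv ℝ 1 φ x (fun _ => z) = fderiv ℝ φ x z :=
    iteratedFDeriv_one_apply _
  rw [← h1]
  exact H

set_option maxHeartbeats 2000000 in
/-- Quadratic pointwise expansion of `D_y[φ](x)` for `p ≥ 4`. -/
theorem statement10 {d : ℕ} (p : ℝ) (hp : 4 ≤ p) (x : Euc d) (R : ℝ)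
    (hR0 : 0 < R) (hR1 : R < 1) (φ : Euc d → ℝ) (M : ℝ) (hφ : C4bOn φ (ball x R) M) :
    ∃ C > 0, ∀ y : Euc d, y ∈ ball (0 : Euc d) (R / 2) → y ≠ 0 →
      |DyOp p φ x y -
          (p - 1) / ‖y‖ ^ p * |innP (gradient φ x) y| ^ (p - 2) * D2 φ x y y| ≤
        C * ‖y‖ ^ 2 := by
  obtain ⟨hsm, hbd⟩ := hφ
  have hM0 : 0 ≤ M := le_trans (norm_nonneg _) (hbd 0 (by norm_num) x (mem_ball_self hR0))
  set N : ℝ := M + 1 with hNdef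
  have hN1 : 1 ≤ N := by simp only [hNdef]; linarith
  have hN0 : 0 < N := by linarith
  have hp1 : (0:ℝ) ≤ p - 1 := by linarith
  have hp2 : (0:ℝ) ≤ p - 2 := by linarith
  have hp3 : (0:ℝ) ≤ p - 3 := by linarith
  have hp4 : (0:ℝ) ≤ p - 4 := by linarith
  set c₁ : ℝ := (p-1) * N ^ (p-2) * N / 12 with hc₁
  set c₂ : ℝ := (p-1)*(p-2) * N ^ (p-4) * N ^ (3:ℕ) with hc₂
  set c₃ : ℝ := (p-1)*(p-2)*(p-3) * (2*N) ^ (p-4) * N ^ (3:ℕ) / 3 with hc₃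
  have hc₁0 : 0 ≤ c₁ := by
    apply div_nonneg _ (by norm_num)
    exact mul_nonneg (mul_nonneg hp1 (Real.rpow_nonneg hN0.le _)) hN0.le
  have hc₂0 : 0 ≤ c₂ :=
    mul_nonneg (mul_nonneg (mul_nonneg hp1 hp2) (Real.rpow_nonneg hN0.le _)) (by positivity)
  have hc₃0 : 0 ≤ c₃ := by
    apply div_nonneg _ (by norm_num)
    exact mul_nonneg (mul_nonneg (mul_nonneg (mul_nonneg hp1 hp2) hp3)
      (Real.rpow_nonneg (by linarith) _)) (by positivity)
  refine ⟨c₁ + c₂ + c₃ + 1, by linarith, ?_⟩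
  intro y hy hy0
  set r : ℝ := ‖y‖ with hrdef
  have hr0 : 0 < r := norm_pos_iff.mpr hy0
  have hyR : r < R / 2 := by rwa [mem_ball_zero_iff] at hy
  have hr1 : r < 1 := by linarith
  have hrR : r < R := by linarith
  -- basic bounds on derivatives at x
  have hx : x ∈ ball x R := mem_ball_self hR0
  have hbd' : ∀ k : ℕ, k ≤ 4 → ‖iteratedFDeriv ℝ k φ x‖ ≤ M := by
    intro k hk
    rw [← iteratedFDerivWithin_of_isOpen k isOpen_ball hx]
    exact hbd k hk x hx
  have happ : ∀ k : ℕ, k ≤ 4 → |iteratedFDeriv ℝ k φ x (fun _ => y)| ≤ M * r ^ k := by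
    intro k hk
    calc |iteratedFDeriv ℝ k φ x (fun _ => y)|
        ≤ ‖iteratedFDeriv ℝ k φ x‖ * ∏ _i : Fin k, ‖y‖ :=
          (iteratedFDeriv ℝ k φ x).le_opNorm _
      _ ≤ M * r ^ k := by
          rw [Finset.prod_const]
          simp only [Finset.card_univ, Fintype.card_fin]
          exact mul_le_mul_of_nonneg_right (hbd' k hk) (by positivity)
  set s : ℝ := fderiv ℝ φ x y with hsdef
  set q2 : ℝ := iteratedFDeriv ℝ 2 φ x (fun _ => y) with hq2def
  set c3 : ℝ := iteratedFDeriv ℝ 3 φ x (fun _ => y) with hc3def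
  have hs : |s| ≤ M * r := by
    have h1 : iteratedFDeriv ℝ 1 φ x (fun _ => y) = s := iteratedFDeriv_one_apply _
    have := happ 1 (by norm_num)
    rw [h1, pow_one] at this
    exact this
  have hq2 : |q2| ≤ M * r ^ 2 := happ 2 (by norm_num)
  have hc3 : |c3| ≤ M * r ^ 3 := happ 3 (by norm_num)
  -- Taylor expansions for φ(x ± y)
  have hTp := phi_taylor hR0 hsm (hbd 4 (by norm_num)) (show ‖y‖ < R from hrR)
  have hTm := phi_taylor hR0 hsm (hbd 4 (by norm_num)) (show ‖-y‖ < R by rwa [norm_neg])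
  have hfneg : fderiv ℝ φ x (-y) = -s := by rw [map_neg]
  have h2neg : iteratedFDeriv ℝ 2 φ x (fun _ : Fin 2 => -y) = q2 := by
    have := (iteratedFDeriv ℝ 2 φ x).map_smul_univ (fun _ : Fin 2 => (-1:ℝ)) (fun _ => y)
    simpa using this
  have h3neg : iteratedFDeriv ℝ 3 φ x (fun _ : Fin 3 => -y) = -c3 := by
    have h := (iteratedFDeriv ℝ 3 φ x).map_smul_univ (fun _ : Fin 3 => (-1:ℝ)) (fun _ => y)
    simp only [neg_smul, one_smul, Finset.prod_const, Finset.card_univ, Fintype.card_fin,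
      smul_eq_mul] at h
    rw [show ((-1:ℝ)) ^ 3 = -1 by norm_num] at h
    rw [h]
    ring
  rw [hfneg, h2neg, h3neg, ← sub_eq_add_neg, norm_neg] at hTm
  set eP : ℝ := φ (x + y) - φ x - s - q2 / 2 - c3 / 6 with hep
  have hTp' : |eP| ≤ M * r ^ 4 / 24 := hTp
  set eM : ℝ := φ (x - y) - φ x + s - q2 / 2 + c3 / 6 with hem
  have hTm' : |eM| ≤ M * r ^ 4 / 24 := by
    have : φ (x - y) - φ x - -s - q2 / 2 - -c3 / 6 = eM := by rw [hem]; ring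
    rwa [this] at hTm
  set u : ℝ := q2 / 2 + c3 / 6 + eP with hu_def
  set v : ℝ := q2 / 2 - c3 / 6 + eM with hv_def
  have ha : φ (x + y) - φ x = s + u := by rw [hu_def, hep]; ring
  have hb : φ (x - y) - φ x = -(s + -v) := by rw [hv_def, hem]; ring
  -- size bounds
  have hr32 : r ^ 3 ≤ r ^ 2 := pow_le_pow_of_le_one hr0.le hr1.le (by norm_num)
  have hr42 : r ^ 4 ≤ r ^ 2 := pow_le_pow_of_le_one hr0.le hr1.le (by norm_num)
  have hr43 : r ^ 4 ≤ r ^ 3 := pow_le_pow_of_le_one hr0.le hr1.le (by norm_num)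
  have habs3 : ∀ w₁ w₂ w₃ : ℝ, |w₁ + w₂ + w₃| ≤ |w₁| + |w₂| + |w₃| := by
    intro w₁ w₂ w₃
    calc |w₁ + w₂ + w₃| ≤ |w₁ + w₂| + |w₃| := abs_add_le _ _
      _ ≤ |w₁| + |w₂| + |w₃| := by linarith [abs_add_le w₁ w₂]
  have hM2 : M * r ^ 3 ≤ M * r ^ 2 := mul_le_mul_of_nonneg_left hr32 hM0
  have hM42 : M * r ^ 4 ≤ M * r ^ 2 := mul_le_mul_of_nonneg_left hr42 hM0
  have hM43 : M * r ^ 4 ≤ M * r ^ 3 := mul_le_mul_of_nonneg_left hr43 hM0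
  have hu : |u| ≤ N * r ^ 2 := by
    have h := habs3 (q2 / 2) (c3 / 6) eP
    have h1 : |q2 / 2| = |q2| / 2 := by rw [abs_div]; norm_num
    have h2 : |c3 / 6| = |c3| / 6 := by rw [abs_div]; norm_num
    rw [hu_def]
    rw [h1, h2] at h
    have hr20 : 0 ≤ r ^ 2 := by positivity
    calc |q2 / 2 + c3 / 6 + eP| ≤ |q2| / 2 + |c3| / 6 + |eP| := h
      _ ≤ M * r ^ 2 / 2 + M * r ^ 3 / 6 + M * r ^ 4 / 24 := by linarith
      _ ≤ N * r ^ 2 := by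
          have hMr2 : 0 ≤ M * r ^ 2 := mul_nonneg hM0 (by positivity)
          have hr20 : (0:ℝ) ≤ r ^ 2 := by positivity
          rw [hNdef]
          linarith
  have hv : |v| ≤ N * r ^ 2 := by
    have h := habs3 (q2 / 2) (-(c3 / 6)) eM
    have h1 : |q2 / 2| = |q2| / 2 := by rw [abs_div]; norm_num
    have h2 : |-(c3 / 6)| = |c3| / 6 := by rw [abs_neg, abs_div]; norm_num
    rw [hv_def]
    rw [h1, h2] at h
    have h3 : q2 / 2 + -(c3 / 6) + eM = q2 / 2 - c3 / 6 + eM := by ring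
    rw [h3] at h
    calc |q2 / 2 - c3 / 6 + eM| ≤ |q2| / 2 + |c3| / 6 + |eM| := h
      _ ≤ M * r ^ 2 / 2 + M * r ^ 3 / 6 + M * r ^ 4 / 24 := by linarith
      _ ≤ N * r ^ 2 := by
          have hMr2 : 0 ≤ M * r ^ 2 := mul_nonneg hM0 (by positivity)
          have hr20 : (0:ℝ) ≤ r ^ 2 := by positivity
          rw [hNdef]
          linarith
  have hsN : |s| ≤ N * r := by
    calc |s| ≤ M * r := hs
      _ ≤ N * r := by rw [hNdef]; linarith [hr0.le]
  have huv : |u + v| ≤ 2 * N * r ^ 2 := by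
    calc |u + v| ≤ |u| + |v| := abs_add_le _ _
      _ ≤ 2 * N * r ^ 2 := by linarith
  have humv : |u - v| ≤ N * r ^ 3 := by
    have h3 : u - v = c3 / 3 + (eP - eM) := by rw [hu_def, hv_def]; ring
    rw [h3]
    calc |c3 / 3 + (eP - eM)| ≤ |c3 / 3| + |eP - eM| := abs_add_le _ _
      _ ≤ |c3| / 3 + (|eP| + |eM|) := by
          rw [abs_div]
          norm_num
          linarith [abs_sub eP eM]
      _ ≤ M * r ^ 3 / 3 + (M * r ^ 4 / 24 + M * r ^ 4 / 24) := by linarith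
      _ ≤ N * r ^ 3 := by
          have hMr3 : 0 ≤ M * r ^ 3 := mul_nonneg hM0 (by positivity)
          have hr30 : (0:ℝ) ≤ r ^ 3 := by positivity
          rw [hNdef]
          linarith
  -- the segment bound for the Jp Taylor expansion
  set B3 : ℝ := (p-1)*(p-2)*(p-3) * ((2*N) ^ (p-4) * r ^ (p-4)) with hB3def
  have hseg : ∀ w : ℝ, |w| ≤ N * r ^ 2 →
      ∀ t ∈ Set.Icc (0:ℝ) 1, (p-1)*(p-2)*(p-3) * |s + t * w| ^ (p-4) ≤ B3 := by
    intro w hw t ht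
    have h1 : |s + t * w| ≤ 2 * N * r := by
      have h2 : |t * w| ≤ |w| := by
        rw [abs_mul]
        calc |t| * |w| ≤ 1 * |w| := by
              apply mul_le_mul_of_nonneg_right _ (abs_nonneg _)
              rw [abs_le]; exact ⟨by linarith [ht.1], ht.2⟩
          _ = |w| := one_mul _
      have h4 : N * r ^ 2 ≤ N * r := by
        have := pow_le_pow_of_le_one hr0.le hr1.le one_le_two
        rw [pow_one] at this
        exact mul_le_mul_of_nonneg_left this hN0.le
      calc |s + t * w| ≤ |s| + |t * w| := abs_add_le _ _
        _ ≤ N * r + N * r ^ 2 := by linarith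
        _ ≤ 2 * N * r := by linarith
    have h5 : |s + t * w| ^ (p-4) ≤ (2 * N * r) ^ (p-4) :=
      Real.rpow_le_rpow (abs_nonneg _) h1 hp4
    have h6 : (2 * N * r) ^ (p-4) = (2*N) ^ (p-4) * r ^ (p-4) :=
      Real.mul_rpow (by positivity) hr0.le
    rw [hB3def]
    rw [h6] at h5
    exact mul_le_mul_of_nonneg_left h5 (by positivity)
  have hEp := taylor3 hp s u B3 (hseg u hu)
  have hEm := taylor3 hp s (-v) B3 (hseg (-v) (by rwa [abs_neg]))
  -- rpow exponent juggling
  have G : ∀ (a : ℝ) (n : ℕ), a + (n:ℝ) = 2 + p → r ^ a * r ^ n = r ^ (2:ℕ) * r ^ p := by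
    intro a n h
    have h2 : ((2:ℕ):ℝ) + p = a + (n:ℝ) := by push_cast; linarith
    rw [← Real.rpow_natCast r n, ← Real.rpow_natCast r 2, ← Real.rpow_add hr0,
      ← Real.rpow_add hr0, h2]
  have G1 : r ^ (p-2) * r ^ (4:ℕ) = r ^ (2:ℕ) * r ^ p := G (p-2) 4 (by push_cast; ring)
  have G2 : r ^ (p-4) * r ^ (6:ℕ) = r ^ (2:ℕ) * r ^ p := G (p-4) 6 (by push_cast; ring)
  -- rpow bounds on |s|
  have hs2 : |s| ^ (p-2) ≤ N ^ (p-2) * r ^ (p-2) := by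
    rw [← Real.mul_rpow hN0.le hr0.le]
    exact Real.rpow_le_rpow (abs_nonneg _) hsN hp2
  have hs4 : |s| ^ (p-4) ≤ N ^ (p-4) * r ^ (p-4) := by
    rw [← Real.mul_rpow hN0.le hr0.le]
    exact Real.rpow_le_rpow (abs_nonneg _) hsN hp4
  -- the main decomposition
  set f1 : ℝ := (p-1) * |s| ^ (p-2) with hf1
  set f2 : ℝ := (p-1)*(p-2) * (|s| ^ (p-4) * s) with hf2
  set Ep : ℝ := Jp p (s + u) - Jp p s - f1 * u - f2 * u ^ 2 / 2 with hEpdef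
  set Em : ℝ := Jp p (s + -v) - Jp p s - f1 * (-v) - f2 * (-v) ^ 2 / 2 with hEmdef
  have hEp' : |Ep| ≤ B3 * |u| ^ 3 / 6 := hEp
  have hEm' : |Em| ≤ B3 * |v| ^ 3 / 6 := by
    have h := hEm
    rwa [abs_neg] at h
  have hodd : ∀ ξ : ℝ, Jp p (-ξ) = -Jp p ξ := by
    intro ξ
    simp only [Jp, abs_neg, mul_neg]
  have hA : Jp p (φ (x + y) - φ x) + Jp p (φ (x - y) - φ x)
      = Jp p (s + u) - Jp p (s + -v) := by
    rw [ha, hb, hodd]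
    ring
  -- A - T = Ep - Em + f1 * (eP + eM) + f2 * (u^2 - v^2)/2
  set T : ℝ := (p-1) * |s| ^ (p-2) * q2 with hT
  clear_value N r s q2 c3 eP eM u v B3 f1 f2 Ep Em T c₁ c₂ c₃
  have hdecomp : Jp p (s + u) - Jp p (s + -v) - T
      = Ep - Em + f1 * (eP + eM) + f2 * ((u + v) * (u - v)) / 2 := by
    rw [hEpdef, hEmdef, hT, hf1, hu_def, hv_def]
    ring
  -- bound the three pieces
  have hpiece1 : |f1 * (eP + eM)| ≤ c₁ * (r ^ (2:ℕ) * r ^ p) := by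
    rw [abs_mul, hf1, abs_mul]
    rw [abs_of_nonneg hp1, abs_of_nonneg (Real.rpow_nonneg (abs_nonneg _) _)]
    have h1 : |eP + eM| ≤ M * r ^ 4 / 12 := by
      calc |eP + eM| ≤ |eP| + |eM| := abs_add_le _ _
        _ ≤ M * r ^ 4 / 12 := by linarith
    calc (p-1) * |s| ^ (p-2) * |eP + eM|
        ≤ (p-1) * (N ^ (p-2) * r ^ (p-2)) * (M * r ^ 4 / 12) := by
          apply mul_le_mul (mul_le_mul_of_nonneg_left hs2 hp1) h1 (abs_nonneg _)
          positivity
      _ = (p-1) * N ^ (p-2) * M / 12 * (r ^ (p-2) * r ^ (4:ℕ)) := by ring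
      _ ≤ (p-1) * N ^ (p-2) * N / 12 * (r ^ (p-2) * r ^ (4:ℕ)) := by
          apply mul_le_mul_of_nonneg_right _ (by positivity)
          have h8 : 0 ≤ (p-1) * N ^ (p-2) := mul_nonneg hp1 (Real.rpow_nonneg hN0.le _)
          have h9 := mul_le_mul_of_nonneg_left (show M ≤ N by rw [hNdef]; linarith) h8
          linarith
      _ = c₁ * (r ^ (2:ℕ) * r ^ p) := by rw [G1, hc₁]
  have habsm : ∀ a b : ℝ, |a - b| ≤ |a| + |b| := by
    intro a b
    rw [sub_eq_add_neg]
    calc |a + -b| ≤ |a| + |-b| := abs_add_le _ _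
      _ = |a| + |b| := by rw [abs_neg]
  have hpiece2 : |f2 * ((u + v) * (u - v)) / 2| ≤ c₂ * (r ^ (2:ℕ) * r ^ p) := by
    have hf2b : |f2| ≤ (p-1)*(p-2) * (N ^ (p-4) * r ^ (p-4) * (N * r)) := by
      rw [hf2, abs_mul, abs_of_nonneg (mul_nonneg hp1 hp2), abs_mul,
        abs_of_nonneg (Real.rpow_nonneg (abs_nonneg _) _)]
      apply mul_le_mul_of_nonneg_left _ (mul_nonneg hp1 hp2)
      exact mul_le_mul hs4 hsN (abs_nonneg _) (by positivity)
    have h7 : |f2| * (|u + v| * |u - v|)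
        ≤ ((p-1)*(p-2) * (N ^ (p-4) * r ^ (p-4) * (N * r))) * (2 * N * r ^ 2 * (N * r ^ 3)) :=
      mul_le_mul hf2b (mul_le_mul huv humv (abs_nonneg _) (by positivity))
        (mul_nonneg (abs_nonneg _) (abs_nonneg _)) (by positivity)
    calc |f2 * ((u + v) * (u - v)) / 2| = |f2| * (|u + v| * |u - v|) / 2 := by
          rw [abs_div, abs_mul, abs_mul]
          norm_num
      _ ≤ ((p-1)*(p-2) * (N ^ (p-4) * r ^ (p-4) * (N * r)))
            * (2 * N * r ^ 2 * (N * r ^ 3)) / 2 := by linarith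
      _ = c₂ * (r ^ (2:ℕ) * r ^ p) := by rw [hc₂, ← G2]; ring
  have hpiece3 : |Ep| + |Em| ≤ c₃ * (r ^ (2:ℕ) * r ^ p) := by
    have hu3 : |u| ^ 3 ≤ (N * r ^ 2) ^ 3 := pow_le_pow_left₀ (abs_nonneg _) hu 3
    have hv3 : |v| ^ 3 ≤ (N * r ^ 2) ^ 3 := pow_le_pow_left₀ (abs_nonneg _) hv 3
    have hB30 : 0 ≤ B3 := by
      rw [hB3def]
      exact mul_nonneg (mul_nonneg (mul_nonneg hp1 hp2) hp3)
        (mul_nonneg (Real.rpow_nonneg (by linarith) _) (Real.rpow_nonneg hr0.le _))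
    calc |Ep| + |Em| ≤ B3 * |u| ^ 3 / 6 + B3 * |v| ^ 3 / 6 := by linarith
      _ ≤ B3 * (N * r ^ 2) ^ 3 / 6 + B3 * (N * r ^ 2) ^ 3 / 6 := by
          have h1 := mul_le_mul_of_nonneg_left hu3 hB30
          have h2 := mul_le_mul_of_nonneg_left hv3 hB30
          linarith
      _ = c₃ * (r ^ (2:ℕ) * r ^ p) := by rw [hc₃, hB3def, ← G2]; ring
  have hmain : |Jp p (s + u) - Jp p (s + -v) - T|
      ≤ (c₁ + c₂ + c₃) * (r ^ (2:ℕ) * r ^ p) := by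
    rw [hdecomp]
    have t1 : |Ep - Em + f1 * (eP + eM) + f2 * ((u + v) * (u - v)) / 2|
        ≤ |Ep - Em + f1 * (eP + eM)| + |f2 * ((u + v) * (u - v)) / 2| := abs_add_le _ _
    have t2 : |Ep - Em + f1 * (eP + eM)| ≤ |Ep - Em| + |f1 * (eP + eM)| := abs_add_le _ _
    have t3 : |Ep - Em| ≤ |Ep| + |Em| := habsm _ _
    have := hpiece1
    linarith
  -- final conversion
  have hrp : 0 < r ^ p := Real.rpow_pos_of_pos hr0 p
  have hsinner : innP (gradient φ x) y = s := by
    rw [hsdef]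
    unfold innP gradient
    exact InnerProductSpace.toDual_symm_apply
  have hq2D : D2 φ x y y = q2 := by
    unfold D2
    rw [hq2def]
    congr 1
    funext i
    fin_cases i <;> rfl
  unfold DyOp
  rw [hA, hsinner, hq2D, ← hrdef]
  have hfrac : (Jp p (s + u) - Jp p (s + -v)) / r ^ p - (p - 1) / r ^ p * |s| ^ (p-2) * q2
      = (Jp p (s + u) - Jp p (s + -v) - T) / r ^ p := by
    rw [hT]; ring
  rw [hfrac, abs_div, abs_of_nonneg hrp.le, div_le_iff₀ hrp]
  have hX0 : 0 ≤ r ^ (2:ℕ) * r ^ p := by positivity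
  calc |Jp p (s + u) - Jp p (s + -v) - T| ≤ (c₁ + c₂ + c₃) * (r ^ (2:ℕ) * r ^ p) := hmain
    _ ≤ (c₁ + c₂ + c₃ + 1) * r ^ (2:ℕ) * r ^ p := by
        have he : (c₁ + c₂ + c₃ + 1) * r ^ (2:ℕ) * r ^ p
            = (c₁ + c₂ + c₃) * (r ^ (2:ℕ) * r ^ p) + r ^ (2:ℕ) * r ^ p := by ring
        rw [he]
        linarith
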